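/- Let N ≥ 1 and let c_0, c_1, …, c_{N−1} be real numbers. Let T ∈ ℝ^{N×N} be the symmetric Toeplitz matrix T_{ij} = c_{|i−j|}, and define ĉ_m = c_m if 0 ≤ m ≤ N−1 and ĉ_m = 0 otherwise. Let H ∈ ℝ^{N×N} be the Hankel matrix H_{ij} = ĉ_{i+j} + ĉ_{2(N+1)−(i+j)} for 1 ≤ i, j ≤ N. Then the τ matrix T − H is diagonalized by the discrete sine transform: for each k ∈ {1, …, N}, the sine vector v^{(k)} with components v^{(k)}_j = sin(jkπ/(N+1)) satisfies (T − H)·v^{(k)} = λ_k·v^{(k)} with λ_k = c_0 + 2·∑_{m=1}^{N−1} c_m·cos(mkπ/(N+1)); equivalently S(T − H)S is the diagonal matrix diag(λ_1, …, λ_N), where S is the DST matrix. -/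

import Mathlib

open Real Matrix

/-- The discrete sine transform (DST) matrix of order `N`. -/
noncomputable def dstMatrix (N : ℕ) : Matrix (Fin N) (Fin N) ℝ :=
  Matrix.of fun j k =>
    Real.sqrt (2 / ((N : ℝ) + 1)) *
      Real.sin ((((j : ℕ) : ℝ) + 1) * (((k : ℕ) : ℝ) + 1) * π / ((N : ℝ) + 1))

/-- `ĉ_m = c_m` for `0 ≤ m ≤ N-1` and `ĉ_m = 0` otherwise. -/
def chat (N : ℕ) (c : ℕ → ℝ) (m : ℕ) : ℝ := if m < N then c m else 0

/-- The symmetric Toeplitz matrix `T_{ij} = c_{|i-j|}`. -/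
def toeplitzOf (N : ℕ) (c : ℕ → ℝ) : Matrix (Fin N) (Fin N) ℝ :=
  Matrix.of fun i j => c (((i : ℤ) - (j : ℤ)).natAbs)

/-- The Hankel correction matrix `H_{ij} = ĉ_{i+j} + ĉ_{2(N+1)-(i+j)}` (1-based indices). -/
def hankelOf (N : ℕ) (c : ℕ → ℝ) : Matrix (Fin N) (Fin N) ℝ :=
  Matrix.of fun i j =>
    chat N c (((i : ℕ) + 1) + ((j : ℕ) + 1)) +
      chat N c (2 * (N + 1) - (((i : ℕ) + 1) + ((j : ℕ) + 1)))

/-- The eigenvalues `λ_k = c_0 + 2 ∑_{m=1}^{N-1} c_m cos(mkπ/(N+1))` (with `k` 1-based). -/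
noncomputable def tauEigen (N : ℕ) (c : ℕ → ℝ) (k : Fin N) : ℝ :=
  c 0 + 2 * ∑ m ∈ Finset.Ico 1 N,
    c m * Real.cos ((m : ℝ) * (((k : ℕ) : ℝ) + 1) * π / ((N : ℝ) + 1))

/-!
Extend the sine vector to `v a = sin (a θ)` for all `a : ℤ`, with `θ = kπ/(N+1)`; it is odd about
`0` and about `N + 1`. Under this extension the Hankel correction is exactly what turns the
truncated Toeplitz product `∑_{t=1}^{N} c_{|j-t|} v_t` into the full convolution
`∑_{|m|<N} c_{|m|} v_{j-m}`, and `sin ((j-m)θ) + sin ((j+m)θ) = 2 cos (mθ) sin (jθ)` turns that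
into `λ_k v_j`. The DST matrix is an involution (orthogonality of the sine vectors), so the
eigenvector equations `(T - H) S = S Λ` give `S (T - H) S = Λ`.
-/

open Finset

theorem sum_Ioo_neg_eq_add_sum_Ico {M : Type*} [AddCommMonoid M] (f : ℤ → M) {n : ℕ}
    (hn : 1 ≤ n) :
    ∑ m ∈ Ioo (-(n : ℤ)) n, f m = f 0 + ∑ m ∈ Ico 1 n, (f m + f (-m)) := by
  induction n, hn using Nat.le_induction with
  | base => simp [show Ioo (-1 : ℤ) 1 = {0} by decide]
  | succ n hn ih =>
    have hIoo : Ioo (-((n + 1 : ℕ) : ℤ)) ((n + 1 : ℕ) : ℤ) =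
        insert (n : ℤ) (insert (-(n : ℤ)) (Ioo (-(n : ℤ)) n)) := by
      ext m; simp only [mem_Ioo, mem_insert]; omega
    rw [hIoo, sum_insert (by simp; omega), sum_insert (by simp), ih, sum_Ico_succ_top hn]
    abel

theorem sum_Ioo_natAbs_mul_sin_sub (c : ℕ → ℝ) {n : ℕ} (hn : 1 ≤ n) (x θ : ℝ) :
    ∑ m ∈ Ioo (-(n : ℤ)) n, c m.natAbs * sin (x - m * θ) =
      (c 0 + 2 * ∑ m ∈ Ico 1 n, c m * cos (m * θ)) * sin x := by
  rw [sum_Ioo_neg_eq_add_sum_Ico _ hn, mul_sum, add_mul, sum_mul]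
  simp only [Int.natAbs_neg, Int.natAbs_natCast, Int.cast_neg, Int.cast_natCast, Int.cast_zero,
    Int.natAbs_zero, zero_mul, sub_zero]
  congr 1
  refine sum_congr rfl fun m _ => ?_
  rw [neg_mul, sub_neg_eq_add, sin_sub, sin_add]
  ring

/-- `∑ s, reflKernel N b s * w s` is the value at `b` of the extension of `w : [1, N] → ℝ` that is
odd about `0` and about `N + 1` (for `-N ≤ b ≤ 2N + 1`). -/
def reflKernel (N : ℕ) (b s : ℤ) : ℝ :=
  (if s = b then 1 else 0) - (if s = -b then 1 else 0) - (if s = 2 * (N + 1) - b then 1 else 0)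

theorem sum_Ioo_ite_eq_chat {N : ℕ} (c : ℕ → ℝ) {p : ℤ → Prop} [DecidablePred p] (x : ℤ)
    (hp : ∀ m, p m ↔ m = x) :
    ∑ m ∈ Ioo (-(N : ℤ)) N, (if p m then c m.natAbs else 0) = chat N c x.natAbs := by
  simp only [hp, sum_ite_eq', mem_Ioo, chat]
  exact if_congr (by omega) rfl rfl

theorem toeplitzOf_sub_hankelOf_apply {N : ℕ} (c : ℕ → ℝ) (j t : Fin N) :
    (toeplitzOf N c - hankelOf N c) j t =
      ∑ m ∈ Ioo (-(N : ℤ)) N, c m.natAbs * reflKernel N (j + 1 - m) (t + 1) := by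
  simp only [reflKernel, mul_sub, mul_boole, sum_sub_distrib, Matrix.sub_apply, toeplitzOf,
    hankelOf, of_apply]
  rw [sum_Ioo_ite_eq_chat c (j - t), sum_Ioo_ite_eq_chat c (j + t + 2),
    sum_Ioo_ite_eq_chat c (j + t + 2 - 2 * (N + 1))]
  · have hT : chat N c ((j : ℤ) - t).natAbs = c ((j : ℤ) - t).natAbs := if_pos (by omega)
    rw [hT, sub_sub]
    congr 3 <;> omega
  all_goals intro m; omega

theorem sum_fin_boole_mul_eq {N : ℕ} (v : ℤ → ℝ) (x : ℤ) :
    ∑ t : Fin N, (if (t : ℤ) + 1 = x then 1 else 0) * v (t + 1) =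
      if 1 ≤ x ∧ x ≤ N then v x else 0 := by
  split_ifs with hx
  · have hx' : ((x - 1).toNat : ℤ) + 1 = x := by omega
    rw [Fintype.sum_eq_single ⟨(x - 1).toNat, by omega⟩ fun t ht => ?_]
    · simp only [hx', if_true, one_mul]
    · rw [if_neg fun h => ht (Fin.ext (by simp only; omega)), zero_mul]
  · exact sum_eq_zero fun t _ => by rw [if_neg (by omega), zero_mul]

theorem sum_reflKernel_mul_of_odd {N : ℕ} (v : ℤ → ℝ) (hv : ∀ a, v (-a) = -v a)
    (hv' : ∀ a, v (2 * (N + 1) - a) = -v a) {b : ℤ} (hb : -N ≤ b) (hb' : b < 2 * (N + 1)) :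
    ∑ t : Fin N, reflKernel N b (t + 1) * v (t + 1) = v b := by
  simp only [reflKernel, sub_mul, sum_sub_distrib, sum_fin_boole_mul_eq]
  rcases (show b < 0 ∨ b = 0 ∨ (1 ≤ b ∧ b ≤ N) ∨ b = N + 1 ∨ N + 1 < b by omega)
    with h | rfl | h | rfl | h
  · rw [if_neg (by omega), if_pos (by omega), if_neg (by omega), hv]
    ring
  · rw [if_neg (by omega), if_neg (by omega), if_neg (by omega)]
    linarith [neg_zero (G := ℤ) ▸ hv 0]
  · rw [if_pos h, if_neg (by omega), if_neg (by omega)]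
    ring
  · rw [if_neg (by omega), if_neg (by omega), if_neg (by omega)]
    linarith [show 2 * ((N : ℤ) + 1) - (N + 1) = N + 1 by ring ▸ hv' (N + 1)]
  · rw [if_neg (by omega), if_neg (by omega), if_pos (by omega), hv']
    ring

theorem toeplitzOf_sub_hankelOf_mulVec_apply_of_odd {N : ℕ} (c : ℕ → ℝ) (v : ℤ → ℝ)
    (hv : ∀ a, v (-a) = -v a) (hv' : ∀ a, v (2 * (N + 1) - a) = -v a) (j : Fin N) :
    ((toeplitzOf N c - hankelOf N c) *ᵥ fun t : Fin N => v (t + 1)) j =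
      ∑ m ∈ Ioo (-(N : ℤ)) N, c m.natAbs * v (j + 1 - m) := by
  simp only [mulVec, dotProduct, toeplitzOf_sub_hankelOf_apply, sum_mul]
  rw [sum_comm]
  refine sum_congr rfl fun m hm => ?_
  rw [mem_Ioo] at hm
  simp only [mul_assoc, ← mul_sum]
  rw [sum_reflKernel_mul_of_odd v hv hv' (by omega) (by omega)]

theorem toeplitzOf_sub_hankelOf_mulVec_sin {N : ℕ} (c : ℕ → ℝ) (k : ℤ) :
    (toeplitzOf N c - hankelOf N c) *ᵥ (fun j : Fin N => sin ((j + 1) * k * π / (N + 1))) =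
      (c 0 + 2 * ∑ m ∈ Ico 1 N, c m * cos (m * k * π / (N + 1))) •
        fun j : Fin N => sin ((j + 1) * k * π / (N + 1)) := by
  have hodd : ∀ a : ℤ, sin (((-a : ℤ) : ℝ) * (k * π / (N + 1))) = -sin (a * (k * π / (N + 1))) :=
    fun a => by rw [Int.cast_neg, neg_mul, sin_neg]
  have hrefl : ∀ a : ℤ, sin (((2 * (N + 1) - a : ℤ) : ℝ) * (k * π / (N + 1))) =
      -sin (a * (k * π / (N + 1))) := fun a => by
    rw [show ((2 * (N + 1) - a : ℤ) : ℝ) * (k * π / (N + 1)) = k * (2 * π) - a * (k * π / (N + 1))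
      by push_cast; field_simp, sin_int_mul_two_pi_sub]
  funext j
  calc ((toeplitzOf N c - hankelOf N c) *ᵥ fun j : Fin N => sin ((j + 1) * k * π / (N + 1))) j
      = ∑ m ∈ Ioo (-(N : ℤ)) N, c m.natAbs * sin (((j + 1 - m : ℤ) : ℝ) * (k * π / (N + 1))) := by
        rw [show (fun j : Fin N => sin ((j + 1) * k * π / (N + 1))) =
            fun t : Fin N => sin (((t + 1 : ℤ) : ℝ) * (k * π / (N + 1))) by
          funext t; push_cast; ring_nf]
        exact toeplitzOf_sub_hankelOf_mulVec_apply_of_odd c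
          (fun a : ℤ => sin (a * (k * π / (N + 1)))) hodd hrefl j
    _ = _ := by
        simp only [Int.cast_sub, sub_mul]
        rw [sum_Ioo_natAbs_mul_sin_sub c (Fin.pos j), Pi.smul_apply, smul_eq_mul]
        push_cast
        simp only [mul_div_assoc, mul_assoc]

theorem sum_range_cos_mul_pi_div (N : ℕ) {d : ℤ} (hd : ¬ (2 * (N + 1) : ℤ) ∣ d) :
    ∑ i ∈ range N, cos ((i + 1) * d * π / (N + 1)) = -(1 + cos (d * π)) / 2 := by
  obtain ⟨a, ha⟩ : ∃ a : ℝ, a = d * π / (N + 1) := ⟨_, rfl⟩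
  have ha' : a * (N + 1) = d * π := by rw [ha]; field_simp
  have hsin : sin (a / 2) ≠ 0 := by
    rw [Ne, sin_eq_zero_iff]
    rintro ⟨n, hn⟩
    refine hd ⟨n, ?_⟩
    have : (d : ℝ) * π = (2 * (N + 1) * n : ℝ) * π := by linear_combination -ha' - 2 * (N + 1) * hn
    exact_mod_cast mul_right_cancel₀ pi_ne_zero this
  have key := sin_mul_sum_cos N a a
  rw [show (N : ℝ) * a / 2 = d * π / 2 - a / 2 by linear_combination ha' / 2,
    show ((N : ℝ) - 1) * a / 2 + a = d * π / 2 by linear_combination ha' / 2, sin_sub] at key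
  have hsc : sin (d * π / 2) * cos (d * π / 2) = 0 := by
    rw [← mul_right_inj' (two_ne_zero (α := ℝ)), ← mul_assoc, ← sin_two_mul,
      mul_div_cancel₀ _ two_ne_zero, sin_int_mul_pi, mul_zero]
  have hc := cos_sq (d * π / 2)
  rw [mul_div_cancel₀ _ two_ne_zero] at hc
  apply mul_left_cancel₀ hsin
  convert key using 1
  · congr 1; refine sum_congr rfl fun i _ => ?_; rw [ha]; ring_nf
  · linear_combination sin (a / 2) * hc - cos (a / 2) * hsc

theorem sum_range_sin_mul_sin (N : ℕ) {a b : ℕ} (ha : 1 ≤ a) (haN : a ≤ N) (hbN : b ≤ N) :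
    ∑ i ∈ range N, sin ((i + 1) * a * π / (N + 1)) * sin ((i + 1) * b * π / (N + 1)) =
      if a = b then ((N : ℝ) + 1) / 2 else 0 := by
  have hndvd : ∀ d : ℤ, d ≠ 0 → -(2 * (N + 1)) < d → d < 2 * (N + 1) →
      ¬ (2 * (N + 1) : ℤ) ∣ d :=
    fun d hd0 hlo hhi hdvd => hd0 (Int.eq_zero_of_abs_lt_dvd hdvd (abs_lt.mpr ⟨hlo, hhi⟩))
  have hsum : ∀ i : ℕ, sin ((i + 1) * a * π / (N + 1)) * sin ((i + 1) * b * π / (N + 1)) =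
      (cos ((i + 1) * ((a - b : ℤ) : ℝ) * π / (N + 1)) -
        cos ((i + 1) * ((a + b : ℤ) : ℝ) * π / (N + 1))) / 2 := by
    intro i
    push_cast
    rw [show ((i : ℝ) + 1) * (a - b) * π / (N + 1) =
        (i + 1) * a * π / (N + 1) - (i + 1) * b * π / (N + 1) by ring,
      show ((i : ℝ) + 1) * (a + b) * π / (N + 1) =
        (i + 1) * a * π / (N + 1) + (i + 1) * b * π / (N + 1) by ring, cos_sub, cos_add]
    ring
  rw [sum_congr rfl fun i _ => hsum i, ← sum_div, sum_sub_distrib,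
    sum_range_cos_mul_pi_div N (d := a + b) (hndvd _ (by omega) (by omega) (by omega))]
  split_ifs with hab
  · subst hab
    simp only [sub_self, Int.cast_zero, mul_zero, zero_mul, zero_div, cos_zero, sum_const,
      card_range, nsmul_eq_mul, mul_one]
    rw [show ((a + a : ℤ) : ℝ) * π = (a : ℤ) * (2 * π) by push_cast; ring, cos_int_mul_two_pi]
    ring
  · rw [sum_range_cos_mul_pi_div N (d := a - b) (hndvd _ (by omega) (by omega) (by omega)),
      show ((a + b : ℤ) : ℝ) * π = ((a - b : ℤ) : ℝ) * π + (b : ℤ) * (2 * π) by push_cast; ring,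
      cos_add_int_mul_two_pi]
    ring

theorem dstMatrix_mul_self (N : ℕ) : dstMatrix N * dstMatrix N = 1 := by
  ext j k
  have horth := sum_range_sin_mul_sin N (a := j + 1) (b := k + 1) (by omega) j.isLt k.isLt
  rw [← Fin.sum_univ_eq_sum_range] at horth
  have hsqrt : √(2 / ((N : ℝ) + 1)) * √(2 / ((N : ℝ) + 1)) = 2 / (N + 1) :=
    mul_self_sqrt (by positivity)
  calc (dstMatrix N * dstMatrix N) j k
      = 2 / (N + 1) * ∑ i : Fin N, sin ((i + 1) * ((j + 1 : ℕ) : ℝ) * π / (N + 1)) *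
          sin ((i + 1) * ((k + 1 : ℕ) : ℝ) * π / (N + 1)) := by
        simp only [mul_apply, dstMatrix, of_apply, mul_sum]
        refine sum_congr rfl fun i _ => ?_
        push_cast
        rw [show ((j : ℝ) + 1) * (i + 1) * π / (N + 1) = (i + 1) * (j + 1) * π / (N + 1) by ring]
        linear_combination (sin ((i + 1) * (j + 1) * π / (N + 1)) *
          sin ((i + 1) * (k + 1) * π / (N + 1))) * hsqrt
    _ = (1 : Matrix (Fin N) (Fin N) ℝ) j k := by
        rw [horth, one_apply]
        simp only [Nat.add_right_cancel_iff, Fin.val_inj]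
        split_ifs
        · field_simp
        · rw [mul_zero]

theorem Matrix.mul_eq_mul_diagonal_of_mulVec_col {n R : Type*} [Fintype n] [DecidableEq n]
    [CommSemiring R] {A B : Matrix n n R} {d : n → R}
    (h : ∀ k, A *ᵥ (fun i => B i k) = d k • fun i => B i k) : A * B = B * diagonal d := by
  ext j k
  rw [mul_diagonal]
  simpa [mul_apply, mulVec, dotProduct, mul_comm] using congrFun (h k) j

theorem tau_matrix_diagonalized_by_dst_general (N : ℕ) (c : ℕ → ℝ) :
    (∀ k : Fin N,
      (toeplitzOf N c - hankelOf N c).mulVec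
          (fun j : Fin N =>
            Real.sin ((((j : ℕ) : ℝ) + 1) * (((k : ℕ) : ℝ) + 1) * π / ((N : ℝ) + 1))) =
        tauEigen N c k •
          (fun j : Fin N =>
            Real.sin ((((j : ℕ) : ℝ) + 1) * (((k : ℕ) : ℝ) + 1) * π / ((N : ℝ) + 1)))) ∧
    dstMatrix N * (toeplitzOf N c - hankelOf N c) * dstMatrix N =
      Matrix.diagonal (tauEigen N c) := by
  have eigen : ∀ k : Fin N, (toeplitzOf N c - hankelOf N c) *ᵥ
      (fun j : Fin N => sin (((j : ℝ) + 1) * ((k : ℝ) + 1) * π / (N + 1))) =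
        tauEigen N c k • fun j : Fin N => sin (((j : ℝ) + 1) * ((k : ℝ) + 1) * π / (N + 1)) :=
    fun k => by simpa [tauEigen] using toeplitzOf_sub_hankelOf_mulVec_sin c ((k : ℤ) + 1)
  refine ⟨eigen, ?_⟩
  have hcols : (toeplitzOf N c - hankelOf N c) * dstMatrix N =
      dstMatrix N * diagonal (tauEigen N c) := by
    refine mul_eq_mul_diagonal_of_mulVec_col fun k => ?_
    change _ *ᵥ (√(2 / ((N : ℝ) + 1)) • _) = _ • (√(2 / ((N : ℝ) + 1)) • _)
    rw [mulVec_smul, eigen k, smul_comm]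
  rw [Matrix.mul_assoc, hcols, ← Matrix.mul_assoc, dstMatrix_mul_self, Matrix.one_mul]

theorem tau_matrix_diagonalized_by_dst (N : ℕ) (hN : 1 ≤ N) (c : ℕ → ℝ) :
    (∀ k : Fin N,
      (toeplitzOf N c - hankelOf N c).mulVec
          (fun j : Fin N =>
            Real.sin ((((j : ℕ) : ℝ) + 1) * (((k : ℕ) : ℝ) + 1) * π / ((N : ℝ) + 1))) =
        tauEigen N c k •
          (fun j : Fin N =>
            Real.sin ((((j : ℕ) : ℝ) + 1) * (((k : ℕ) : ℝ) + 1) * π / ((N : ℝ) + 1)))) ∧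
    dstMatrix N * (toeplitzOf N c - hankelOf N c) * dstMatrix N =
      Matrix.diagonal (tauEigen N c) :=
  tau_matrix_diagonalized_by_dst_general N c
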